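/- (Regret of Sleeping CB with the AdaptiveNormal potential) In the Sleeping CB setup, let Z̄_{t,i} = ∑_{s=1}^{t} |z_{s,i}| and define the betting amounts recursively by w_{t,i} = β_{t,i} · (1 + ∑_{s=1}^{t−1} z_{s,i} w_{s,i}) with betting fractions β_{t,i} = 2·σ( 2·(∑_{s=1}^{t−1} z_{s,i}) / (2 + Z̄_{t−1,i}) ) − 1, where σ(x) = 1/(1+e^{−x}) (this corresponds to the AdaptiveNormal potential with ξ = 1). Let W_u = 1 + ∑_{i=1}^N u_i Z̄_{T,i}. Then for every u ∈ Δ^N with π_i > 0 whenever u_i > 0, Regret_T(u) ≤ sqrt( 2 · W_u · ( KL(u‖π) + (1/2)·ln(W_u) ) ). -/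

import Mathlib

/-!
Each expert plays a coin-betting game on the outcomes `z_{t,i} ∈ [-1, 1]` with betting fraction
`tanh (S / (2 + Z̄))`, which is what `2σ(2x) - 1` is. Its wealth stays above `exp F(S, 1 + Z̄)` for
`F(S, c) = S² / (2c) - (log c) / 2`: for `0 ≤ z ≤ 1`, `F(S + z, c + z)` lies below the chord between
`z = 0` and `z = 1`, whose slope is at most `log (1 + β)` for the fraction `β = tanh (S / (c + 1))`,
and `z log (1 + β) ≤ log (1 + zβ)` by concavity. Since the learner's loss is the mean loss under the
positive bets, the prior-weighted gain `∑ π_i z_i w_i` is nonpositive in every round, so the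
prior-weighted wealth stays at most `1`. Gibbs' inequality then gives `∑ u_i F_i ≤ KL(u‖π)`, Jensen
bounds `∑ u_i log c_i` by `log W_u`, and Cauchy–Schwarz turns this into the bound on `∑ u_i S_i`,
which dominates the regret as `g ≥ h - ℓ`.
-/

open Finset

section CoinBetting

open Real

lemma two_mul_one_div_one_add_exp_neg_two_mul_sub_one (x : ℝ) :
    2 * (1 / (1 + exp (-(2 * x)))) - 1 = tanh x := by
  have hsq : exp (-(2 * x)) = exp (-x) ^ 2 := by rw [← exp_nat_mul]; ring_nf
  have hinv : exp x * exp (-x) = 1 := by rw [← exp_add, add_neg_cancel, exp_zero]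
  rw [tanh_eq_sinh_div_cosh, sinh_eq, cosh_eq, hsq]
  field_simp
  linear_combination -2 * exp (-x) * hinv

lemma one_sub_mul_log_add_mul_log_le {a x y : ℝ} (hx : 0 < x) (hy : 0 < y) (ha0 : 0 ≤ a)
    (ha1 : a ≤ 1) : (1 - a) * log x + a * log y ≤ log ((1 - a) * x + a * y) :=
  strictConcaveOn_log_Ioi.concaveOn.2 hx hy (sub_nonneg.2 ha1) ha0 (by ring)

lemma sub_sq_div_two_le_log_one_add_tanh (m : ℝ) : m - m ^ 2 / 2 ≤ log (1 + tanh m) := by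
  have h : 1 + tanh m = exp m / cosh m := by
    rw [tanh_eq_sinh_div_cosh, ← cosh_add_sinh]
    field_simp
  rw [h, log_div (exp_ne_zero m) (cosh_pos m).ne', log_exp]
  have := (log_le_iff_le_exp (cosh_pos m)).2 (cosh_le_exp_half_sq m)
  linarith

lemma one_add_mul_tanh_pos {z : ℝ} (hz : |z| ≤ 1) (x : ℝ) : 0 < 1 + z * tanh x := by
  have : |z * tanh x| < 1 := by
    rw [abs_mul]
    exact lt_of_le_of_lt (mul_le_of_le_one_left (abs_nonneg _) hz) (abs_tanh_lt_one x)
  linarith [neg_abs_le (z * tanh x)]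

/-- The AdaptiveNormal potential with `ξ = 1` is `exp (logPotential S (1 + Z̄))`, where `S` is the
coin sum and `Z̄` the sum of absolute coin outcomes. -/
noncomputable def logPotential (S c : ℝ) : ℝ := S ^ 2 / (2 * c) - log c / 2

lemma logPotential_neg (S c : ℝ) : logPotential (-S) c = logPotential S c := by
  simp only [logPotential, neg_sq]

lemma logPotential_add_le_chord {S c z : ℝ} (hc : 1 ≤ c) (hz0 : 0 ≤ z) (hz1 : z ≤ 1) :
    logPotential (S + z) (c + z) ≤
      (1 - z) * logPotential S c + z * logPotential (S + 1) (c + 1) := by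
  have hquad : (S + z) ^ 2 / (2 * (c + z)) ≤
      (1 - z) * (S ^ 2 / (2 * c)) + z * ((S + 1) ^ 2 / (2 * (c + 1))) := by
    have hgap : (1 - z) * (S ^ 2 / (2 * c)) + z * ((S + 1) ^ 2 / (2 * (c + 1))) -
        (S + z) ^ 2 / (2 * (c + z)) = z * (1 - z) * (S - c) ^ 2 / (2 * c * (c + 1) * (c + z)) := by
      field_simp
      ring
    have : 0 ≤ z * (1 - z) * (S - c) ^ 2 / (2 * c * (c + 1) * (c + z)) :=
      div_nonneg (mul_nonneg (mul_nonneg hz0 (sub_nonneg.2 hz1)) (sq_nonneg _)) (by positivity)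
    linarith
  have hlog := one_sub_mul_log_add_mul_log_le (x := c) (y := c + 1) (by linarith) (by linarith)
    hz0 hz1
  rw [show (1 - z) * c + z * (c + 1) = c + z by ring] at hlog
  unfold logPotential
  linarith

lemma logPotential_add_one_sub_le {S c : ℝ} (hc : 0 < c) :
    logPotential (S + 1) (c + 1) - logPotential S c ≤ log (1 + tanh (S / (c + 1))) := by
  have hc1 : 0 < c + 1 := by linarith
  have hlog : 1 / (c + 1) ≤ log (c + 1) - log c := by
    have := one_sub_inv_le_log_of_pos (div_pos hc1 hc)
    rw [log_div hc1.ne' hc.ne', inv_div] at this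
    have e : 1 - c / (c + 1) = 1 / (c + 1) := by field_simp; ring
    linarith
  have hgap : S / (c + 1) - (S / (c + 1)) ^ 2 / 2 -
      ((S + 1) ^ 2 / (2 * (c + 1)) - S ^ 2 / (2 * c) - 1 / (c + 1) / 2) =
        S ^ 2 / (2 * c * (c + 1) ^ 2) := by
    field_simp
    ring
  have := sub_sq_div_two_le_log_one_add_tanh (S / (c + 1))
  have : 0 ≤ S ^ 2 / (2 * c * (c + 1) ^ 2) := by positivity
  unfold logPotential
  linarith

lemma logPotential_add_le_add_log {S c z : ℝ} (hc : 1 ≤ c) (hz0 : 0 ≤ z) (hz1 : z ≤ 1) :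
    logPotential (S + z) (c + z) ≤ logPotential S c + log (1 + z * tanh (S / (c + 1))) := by
  set β := tanh (S / (c + 1))
  have hchord := logPotential_add_le_chord (S := S) hc hz0 hz1
  have hend := mul_le_mul_of_nonneg_left
    (logPotential_add_one_sub_le (S := S) (c := c) (by linarith)) hz0
  have hconc := one_sub_mul_log_add_mul_log_le one_pos
    (by linarith [neg_one_lt_tanh (S / (c + 1))]) hz0 hz1 (y := 1 + β)
  rw [log_one, mul_zero, zero_add, show (1 - z) * 1 + z * (1 + β) = 1 + z * β by ring] at hconc
  linarith

lemma exp_logPotential_add_le {S c z : ℝ} (hc : 1 ≤ c) (hz : |z| ≤ 1) :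
    exp (logPotential (S + z) (c + |z|)) ≤
      (1 + z * tanh (S / (c + 1))) * exp (logPotential S c) := by
  suffices hlog : logPotential (S + z) (c + |z|) ≤
      logPotential S c + log (1 + z * tanh (S / (c + 1))) by
    calc exp (logPotential (S + z) (c + |z|))
        ≤ exp (logPotential S c + log (1 + z * tanh (S / (c + 1)))) := exp_le_exp.2 hlog
      _ = _ := by rw [exp_add, exp_log (one_add_mul_tanh_pos hz _), mul_comm]
  rcases le_or_gt 0 z with hz0 | hz0
  · rw [abs_of_nonneg hz0] at hz ⊢
    exact logPotential_add_le_add_log hc hz0 hz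
  · rw [abs_of_neg hz0] at hz ⊢
    have := logPotential_add_le_add_log (S := -S) hc (neg_nonneg.2 hz0.le) hz
    rwa [← neg_add, logPotential_neg, logPotential_neg, neg_div, tanh_neg, neg_mul_neg] at this

lemma exp_logPotential_le_wealth (z w : ℕ → ℝ) (hz : ∀ s, |z s| ≤ 1)
    (hw : ∀ t, w t = tanh ((∑ s ∈ Icc 1 (t - 1), z s) / (2 + ∑ s ∈ Icc 1 (t - 1), |z s|)) *
      (1 + ∑ s ∈ Icc 1 (t - 1), z s * w s)) (T : ℕ) :
    exp (logPotential (∑ s ∈ Icc 1 T, z s) (1 + ∑ s ∈ Icc 1 T, |z s|)) ≤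
      1 + ∑ s ∈ Icc 1 T, z s * w s := by
  induction T with
  | zero => simp [logPotential]
  | succ t ih =>
    have hsplit (f : ℕ → ℝ) : ∑ s ∈ Icc 1 (t + 1), f s = ∑ s ∈ Icc 1 t, f s + f (t + 1) :=
      sum_Icc_succ_top (by omega) f
    have hV : 1 ≤ 1 + ∑ s ∈ Icc 1 t, |z s| := by
      linarith [sum_nonneg fun s (_ : s ∈ Icc 1 t) => abs_nonneg (z s)]
    have hstep := exp_logPotential_add_le (S := ∑ s ∈ Icc 1 t, z s) hV (hz (t + 1))
    rw [hsplit, hsplit, hsplit, ← add_assoc, hw (t + 1), Nat.add_sub_cancel]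
    calc _ ≤ _ := hstep
      _ ≤ _ := mul_le_mul_of_nonneg_left ih (one_add_mul_tanh_pos (hz (t + 1)) _).le
      _ = _ := by ring_nf

end CoinBetting

lemma abs_mul_gain_le_one {I h ℓ w g : ℝ} (hI : I = 0 ∨ I = 1) (hh : h ∈ Set.Icc (0 : ℝ) 1)
    (hℓ : ℓ ∈ Set.Icc (0 : ℝ) 1) (hg : g = if 0 < w then h - ℓ else max (h - ℓ) 0) :
    |I * g| ≤ 1 := by
  obtain ⟨hh0, hh1⟩ := hh
  obtain ⟨hℓ0, hℓ1⟩ := hℓ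
  rcases hI with rfl | rfl
  · simp
  · rw [one_mul, hg, abs_le]
    split_ifs
    · constructor <;> linarith
    · exact ⟨by linarith [le_max_right (h - ℓ) 0], max_le (by linarith) zero_le_one⟩

section Round

variable {ι : Type*} [Fintype ι] {π I w ℓ p g z : ι → ℝ} {h : ℝ}

lemma sum_div_sum_le_one (a : ι → ℝ) : ∑ i, a i / ∑ j, a j ≤ 1 := by
  rw [← sum_div]
  exact div_self_le_one _

lemma sleeping_loss_mem_Icc (hπ0 : ∀ i, 0 ≤ π i) (hI : ∀ i, I i = 0 ∨ I i = 1)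
    (hℓ : ∀ i, ℓ i ∈ Set.Icc (0 : ℝ) 1)
    (hp : ∀ i, p i =
      if 0 < ∑ j, π j * I j * max (w j) 0
      then (π i * I i * max (w i) 0) / ∑ j, π j * I j * max (w j) 0
      else (π i * I i) / ∑ j, π j * I j)
    (hh : h = ∑ i, I i * p i * ℓ i) : h ∈ Set.Icc (0 : ℝ) 1 := by
  have hI0 (i : ι) : 0 ≤ I i := by rcases hI i with hi | hi <;> simp [hi]
  have hI1 (i : ι) : I i ≤ 1 := by rcases hI i with hi | hi <;> simp [hi]
  have hp0 (i : ι) : 0 ≤ p i := by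
    rw [hp]
    split_ifs with hD
    · exact div_nonneg (by have := hπ0 i; have := hI0 i; positivity) hD.le
    · exact div_nonneg (mul_nonneg (hπ0 i) (hI0 i))
        (sum_nonneg fun j _ => mul_nonneg (hπ0 j) (hI0 j))
  have hp1 : ∑ i, p i ≤ 1 := by
    simp only [hp]
    split_ifs
    exacts [sum_div_sum_le_one _, sum_div_sum_le_one _]
  refine ⟨hh ▸ sum_nonneg fun i _ => mul_nonneg (mul_nonneg (hI0 i) (hp0 i)) (hℓ i).1, ?_⟩
  calc h ≤ ∑ i, p i := hh ▸ sum_le_sum fun i _ =>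
        mul_le_of_le_one_right (mul_nonneg (hI0 i) (hp0 i)) (hℓ i).2 |>.trans
          (mul_le_of_le_one_left (hp0 i) (hI1 i))
    _ ≤ 1 := hp1

/-- The learner's loss is the mean loss under the weights `π_i I_i max (w_i, 0)`, so the positive
bets gain nothing in total, while a nonpositive bet never gains. -/
lemma sum_mul_gain_mul_bet_nonpos (hπ0 : ∀ i, 0 ≤ π i) (hI : ∀ i, I i = 0 ∨ I i = 1)
    (hp : ∀ i, p i =
      if 0 < ∑ j, π j * I j * max (w j) 0
      then (π i * I i * max (w i) 0) / ∑ j, π j * I j * max (w j) 0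
      else (π i * I i) / ∑ j, π j * I j)
    (hh : h = ∑ i, I i * p i * ℓ i)
    (hg : ∀ i, g i = if 0 < w i then h - ℓ i else max (h - ℓ i) 0)
    (hz : ∀ i, z i = I i * g i) :
    ∑ i, π i * (z i * w i) ≤ 0 := by
  set a : ι → ℝ := fun i => π i * I i * max (w i) 0 with ha
  have hI0 (i : ι) : 0 ≤ I i := by rcases hI i with hi | hi <;> simp [hi]
  have ha0 (i : ι) : 0 ≤ a i := by have := hπ0 i; have := hI0 i; positivity
  have hterm (i : ι) : π i * (z i * w i) ≤ a i * (h - ℓ i) := by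
    simp only [ha, hz, hg]
    split_ifs with hwi
    · rw [max_eq_left hwi.le]; exact le_of_eq (by ring)
    · rw [max_eq_right (not_lt.1 hwi), mul_zero, zero_mul]
      exact mul_nonpos_of_nonneg_of_nonpos (hπ0 i) (mul_nonpos_of_nonneg_of_nonpos
        (mul_nonneg (hI0 i) (le_max_right _ _)) (not_lt.1 hwi))
  have hzero : ∑ i, a i * (h - ℓ i) = 0 := by
    by_cases hD : 0 < ∑ j, a j
    · have hIa (i : ι) : I i * a i = a i := by rcases hI i with hi | hi <;> simp [hi, ha]
      have hh' : h * ∑ j, a j = ∑ i, a i * ℓ i := by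
        rw [hh, sum_mul]
        refine sum_congr rfl fun i _ => ?_
        rw [hp, if_pos hD]
        field_simp
        rw [← hIa i]; ring
      simp only [mul_sub, sum_sub_distrib, ← sum_mul, mul_comm (∑ j, a j) h, hh', sub_self]
    · have hall := (sum_eq_zero_iff_of_nonneg fun i _ => ha0 i).1
        (le_antisymm (not_lt.1 hD) (sum_nonneg fun i _ => ha0 i))
      exact sum_eq_zero fun i hi => by rw [hall i hi, zero_mul]
  exact (sum_le_sum fun i _ => hterm i).trans hzero.le

end Round

section Combination

variable {ι : Type*} [Fintype ι] {u π : ι → ℝ}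

lemma mul_log_sub_mul_log_div_le {u π W : ℝ} (hu : 0 ≤ u) (hπ : 0 ≤ π) (hsupp : 0 < u → 0 < π)
    (hW : 0 < W) : u * Real.log W - u * Real.log (u / π) ≤ π * W - u := by
  rcases hu.eq_or_lt with rfl | hu
  · simpa using mul_nonneg hπ hW.le
  have hπ := hsupp hu
  have := Real.log_le_sub_one_of_pos (show 0 < π * W / u by positivity)
  rw [Real.log_div (by positivity) hu.ne', Real.log_mul hπ.ne' hW.ne'] at this
  rw [Real.log_div hu.ne' hπ.ne']
  have e : u * (π * W / u - 1) = π * W - u := by field_simp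
  linarith [mul_le_mul_of_nonneg_left this hu.le]

lemma sum_mul_log_le_sum_mul_log_div (hu0 : ∀ i, 0 ≤ u i) (hu1 : ∑ i, u i = 1)
    (hπ0 : ∀ i, 0 ≤ π i) (hsupp : ∀ i, 0 < u i → 0 < π i) {W : ι → ℝ} (hW : ∀ i, 0 < W i)
    (hπW : ∑ i, π i * W i ≤ 1) :
    ∑ i, u i * Real.log (W i) ≤ ∑ i, u i * Real.log (u i / π i) := by
  have := sum_le_sum fun i (_ : i ∈ univ) =>
    mul_log_sub_mul_log_div_le (hu0 i) (hπ0 i) (hsupp i) (hW i)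
  rw [sum_sub_distrib, sum_sub_distrib, hu1] at this
  linarith

lemma sum_mul_log_le_log_sum_mul (hu0 : ∀ i, 0 ≤ u i) (hu1 : ∑ i, u i = 1) {L : ι → ℝ}
    (hL : ∀ i, 0 < L i) : ∑ i, u i * Real.log (L i) ≤ Real.log (∑ i, u i * L i) :=
  strictConcaveOn_log_Ioi.concaveOn.le_map_sum (fun i _ => hu0 i) hu1 fun i _ => hL i

lemma sum_mul_le_sqrt_of_exp_logPotential_le (hu0 : ∀ i, 0 ≤ u i) (hu1 : ∑ i, u i = 1)
    (hπ0 : ∀ i, 0 ≤ π i) (hsupp : ∀ i, 0 < u i → 0 < π i) {S Z W : ι → ℝ} (hZ : ∀ i, 0 ≤ Z i)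
    (hW : ∀ i, Real.exp (logPotential (S i) (1 + Z i)) ≤ W i) (hπW : ∑ i, π i * W i ≤ 1) :
    ∑ i, u i * S i ≤ Real.sqrt (2 * (1 + ∑ i, u i * Z i) *
      ((∑ i, u i * Real.log (u i / π i)) + (1 / 2) * Real.log (1 + ∑ i, u i * Z i))) := by
  set K := ∑ i, u i * Real.log (u i / π i)
  have hL (i : ι) : 0 < 1 + Z i := by linarith [hZ i]
  have hsumL : ∑ i, u i * (1 + Z i) = 1 + ∑ i, u i * Z i := by
    simp only [mul_add, mul_one, sum_add_distrib, hu1]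
  have hWpos (i : ι) : 0 < W i := (Real.exp_pos _).trans_le (hW i)
  have hgibbs := sum_mul_log_le_sum_mul_log_div hu0 hu1 hπ0 hsupp hWpos hπW
  have hjensen := sum_mul_log_le_log_sum_mul hu0 hu1 hL
  rw [hsumL] at hjensen
  have hmoment : ∑ i, u i * (S i ^ 2 / (1 + Z i)) ≤ 2 * K + Real.log (1 + ∑ i, u i * Z i) := by
    have hsplit (i : ι) : u i * (S i ^ 2 / (1 + Z i)) =
        2 * (u i * logPotential (S i) (1 + Z i)) + u i * Real.log (1 + Z i) := by
      unfold logPotential; field_simp; ring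
    have hlog (i : ι) : u i * logPotential (S i) (1 + Z i) ≤ u i * Real.log (W i) :=
      mul_le_mul_of_nonneg_left ((Real.le_log_iff_exp_le (hWpos i)).2 (hW i)) (hu0 i)
    simp only [hsplit, sum_add_distrib, ← mul_sum]
    linarith [sum_le_sum fun i (_ : i ∈ univ) => hlog i]
  have hcs : (∑ i, u i * S i) ^ 2 ≤
      (∑ i, u i * (S i ^ 2 / (1 + Z i))) * ∑ i, u i * (1 + Z i) :=
    sum_sq_le_sum_mul_sum_of_sq_le_mul univ
      (fun i _ => mul_nonneg (hu0 i) (div_nonneg (sq_nonneg _) (hL i).le))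
      (fun i _ => mul_nonneg (hu0 i) (hL i).le)
      (fun i _ => le_of_eq (by field_simp [(hL i).ne']))
  refine Real.le_sqrt_of_sq_le (hcs.trans ?_)
  rw [hsumL]
  have hWu : 0 ≤ 1 + ∑ i, u i * Z i :=
    add_nonneg zero_le_one (sum_nonneg fun i _ => mul_nonneg (hu0 i) (hZ i))
  linarith [mul_le_mul_of_nonneg_right hmoment hWu]

end Combination

lemma sum_regret_le_sum_mul_sum_gain {ι : Type*} [Fintype ι] {u : ι → ℝ}
    {I ℓ w g z : ℕ → ι → ℝ} {h : ℕ → ℝ} (s : Finset ℕ) (hu0 : ∀ i, 0 ≤ u i)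
    (hI : ∀ t i, I t i = 0 ∨ I t i = 1)
    (hg : ∀ t i, g t i = if 0 < w t i then h t - ℓ t i else max (h t - ℓ t i) 0)
    (hz : ∀ t i, z t i = I t i * g t i) :
    ∑ t ∈ s, ∑ i, I t i * u i * (h t - ℓ t i) ≤ ∑ i, u i * ∑ t ∈ s, z t i := by
  have hle (t : ℕ) (i : ι) : I t i * u i * (h t - ℓ t i) ≤ u i * z t i := by
    have hgain : h t - ℓ t i ≤ g t i := by
      rw [hg]
      split_ifs
      exacts [le_rfl, le_max_left _ _]
    rw [hz]
    rcases hI t i with hi | hi <;> rw [hi]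
    · simp
    · simpa using mul_le_mul_of_nonneg_left hgain (hu0 i)
  simp only [mul_sum]
  rw [sum_comm]
  exact sum_le_sum fun i _ => sum_le_sum fun t _ => hle t i

lemma sum_mul_one_add_sum_le_one {ι : Type*} [Fintype ι] {π : ι → ℝ} {x : ℕ → ι → ℝ}
    (hπ1 : ∑ i, π i = 1) (s : Finset ℕ) (hx : ∀ t, ∑ i, π i * x t i ≤ 0) :
    ∑ i, π i * (1 + ∑ t ∈ s, x t i) ≤ 1 := by
  simp only [mul_add, mul_one, mul_sum]
  rw [sum_add_distrib, hπ1, sum_comm]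
  linarith [sum_nonpos fun t (_ : t ∈ s) => hx t]

theorem sleeping_cb_an_regret_general
    (N T : ℕ)
    (π u : Fin N → ℝ)
    (hπ0 : ∀ i, 0 ≤ π i) (hπ1 : ∑ i, π i = 1)
    (hu0 : ∀ i, 0 ≤ u i) (hu1 : ∑ i, u i = 1)
    (hsupp : ∀ i, 0 < u i → 0 < π i)
    (ℓ Ind w p g z Zbar : ℕ → Fin N → ℝ) (h : ℕ → ℝ)
    (hℓ : ∀ t i, ℓ t i ∈ Set.Icc (0:ℝ) 1)
    (hInd : ∀ t i, Ind t i = 0 ∨ Ind t i = 1)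
    (hZbar : ∀ t i, Zbar t i = ∑ s ∈ Finset.Icc 1 t, |z s i|)
    (hw : ∀ t i, w t i =
      (2 * (1 / (1 + Real.exp
          (-(2 * (∑ s ∈ Finset.Icc 1 (t - 1), z s i) / (2 + Zbar (t - 1) i))))) - 1) *
        (1 + ∑ s ∈ Finset.Icc 1 (t - 1), z s i * w s i))
    (hp : ∀ t i, p t i =
      if 0 < ∑ j, π j * Ind t j * max (w t j) 0
      then (π i * Ind t i * max (w t i) 0) / ∑ j, π j * Ind t j * max (w t j) 0
      else (π i * Ind t i) / ∑ j, π j * Ind t j)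
    (hh : ∀ t, h t = ∑ i, Ind t i * p t i * ℓ t i)
    (hg : ∀ t i, g t i = if 0 < w t i then h t - ℓ t i else max (h t - ℓ t i) 0)
    (hz : ∀ t i, z t i = Ind t i * g t i) :
    ∑ t ∈ Finset.Icc 1 T, ∑ i, Ind t i * u i * (h t - ℓ t i)
      ≤ Real.sqrt (2 * (1 + ∑ i, u i * Zbar T i) *
          ((∑ i, u i * Real.log (u i / π i)) +
            (1 / 2) * Real.log (1 + ∑ i, u i * Zbar T i))) := by
  have hloss (t : ℕ) : h t ∈ Set.Icc (0 : ℝ) 1 :=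
    sleeping_loss_mem_Icc hπ0 (hInd t) (hℓ t) (hp t) (hh t)
  have hz1 (t : ℕ) (i : Fin N) : |z t i| ≤ 1 :=
    hz t i ▸ abs_mul_gain_le_one (hInd t i) (hloss t) (hℓ t i) (hg t i)
  have hwealth (i : Fin N) : Real.exp (logPotential (∑ t ∈ Icc 1 T, z t i) (1 + Zbar T i)) ≤
      1 + ∑ t ∈ Icc 1 T, z t i * w t i := by
    rw [hZbar]
    refine exp_logPotential_le_wealth (z · i) (w · i) (hz1 · i) (fun t => ?_) T
    rw [hw, hZbar, mul_div_assoc, two_mul_one_div_one_add_exp_neg_two_mul_sub_one]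
  have htotal := sum_mul_one_add_sum_le_one (x := fun t i => z t i * w t i) hπ1 (Icc 1 T)
    fun t => sum_mul_gain_mul_bet_nonpos hπ0 (hInd t) (hp t) (hh t) (hg t) (hz t)
  have hZ (i : Fin N) : 0 ≤ Zbar T i := hZbar T i ▸ sum_nonneg fun _ _ => abs_nonneg _
  exact (sum_regret_le_sum_mul_sum_gain _ hu0 hInd hg hz).trans
    (sum_mul_le_sqrt_of_exp_logPotential_le hu0 hu1 hπ0 hsupp hZ hwealth htotal)

/-- Corollary 2, first claim (Regret of Sleeping CB with the AdaptiveNormal potential, ξ = 1):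
with betting fractions `β_{t,i} = 2σ(2 (∑_{s<t} z_{s,i}) / (2 + Z̄_{t−1,i})) − 1` and betting
amounts `w_{t,i} = β_{t,i} (1 + ∑_{s<t} z_{s,i} w_{s,i})`, the sleeping-experts regret is
bounded by `sqrt(2 W_u (KL(u‖π) + (1/2) ln W_u))` for `W_u = 1 + ∑_i u_i Z̄_{T,i}`. -/
theorem sleeping_cb_an_regret
    (N T : ℕ) (hT : 1 ≤ T)
    (π u : Fin N → ℝ)
    (hπ0 : ∀ i, 0 ≤ π i) (hπ1 : ∑ i, π i = 1)
    (hu0 : ∀ i, 0 ≤ u i) (hu1 : ∑ i, u i = 1)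
    (hsupp : ∀ i, 0 < u i → 0 < π i)
    (ℓ Ind w p g z Zbar : ℕ → Fin N → ℝ) (h : ℕ → ℝ)
    (hℓ : ∀ t i, ℓ t i ∈ Set.Icc (0:ℝ) 1)
    (hInd : ∀ t i, Ind t i = 0 ∨ Ind t i = 1)
    (hawake : ∀ t, 1 ≤ t → t ≤ T → ∃ i, Ind t i = 1 ∧ 0 < π i)
    (hZbar : ∀ t i, Zbar t i = ∑ s ∈ Finset.Icc 1 t, |z s i|)
    (hw : ∀ t i, w t i =
      (2 * (1 / (1 + Real.exp
          (-(2 * (∑ s ∈ Finset.Icc 1 (t - 1), z s i) / (2 + Zbar (t - 1) i))))) - 1) *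
        (1 + ∑ s ∈ Finset.Icc 1 (t - 1), z s i * w s i))
    (hp : ∀ t i, p t i =
      if 0 < ∑ j, π j * Ind t j * max (w t j) 0
      then (π i * Ind t i * max (w t i) 0) / ∑ j, π j * Ind t j * max (w t j) 0
      else (π i * Ind t i) / ∑ j, π j * Ind t j)
    (hh : ∀ t, h t = ∑ i, Ind t i * p t i * ℓ t i)
    (hg : ∀ t i, g t i = if 0 < w t i then h t - ℓ t i else max (h t - ℓ t i) 0)
    (hz : ∀ t i, z t i = Ind t i * g t i) :
    ∑ t ∈ Finset.Icc 1 T, ∑ i, Ind t i * u i * (h t - ℓ t i)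
      ≤ Real.sqrt (2 * (1 + ∑ i, u i * Zbar T i) *
          ((∑ i, u i * Real.log (u i / π i)) +
            (1 / 2) * Real.log (1 + ∑ i, u i * Zbar T i))) :=
  sleeping_cb_an_regret_general N T π u hπ0 hπ1 hu0 hu1 hsupp ℓ Ind w p g z Zbar h hℓ hInd hZbar hw
    hp hh hg hz
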